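/- arXiv:1402.4206 — 3 statements merged into one kernel-verified Lean document; each statement's English description precedes it below -/
import Mathlib

section
/- Let m ≥ 1 and let G : ℝ^m → ℝ and Σ : ℝ^m → ℝ be C² functions. Then the inequality (Ξ + ∇G(τ)) · (τ + ∇Σ(Ξ)) ≥ 0 holds for all Ξ, τ ∈ ℝ^m if and only if the following three conditions hold: (i) for all Ξ, τ ∈ ℝ^m, Ξ + ∇G(τ) = 0 if and only if τ + ∇Σ(Ξ) = 0; (ii) G is convex; (iii) Σ is convex. -/
/-!
Whenever `x + ∇f y₀ = 0` and `y₀ + ∇g x = 0`, the dissipation `⟪x + ∇f y, y + ∇g x⟫` equals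
`⟪∇f y - ∇f y₀, y - y₀⟫`. So once the zero sets coincide, nonnegativity of the dissipation is
exactly monotonicity of `∇f` (and, symmetrically, of `∇g`), i.e. convexity. Conversely the
zero sets are forced to coincide: if `x + ∇f y = 0`, the dissipation at `(x + v, y)` is
`⟪v, y + ∇g (x + v)⟫`, and a continuous field `F` with `⟪v, F v⟫ ≥ 0` for all `v` vanishes at `0`.
-/

open scoped RealInnerProductSpace Gradient
open Set AffineMap Filter Topology

section

variable {E : Type*} [NormedAddCommGroup E] [InnerProductSpace ℝ E]

theorem eq_zero_of_forall_inner_self_apply_nonneg {g : E → E} (hg : ContinuousAt g 0)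
    (h : ∀ v, 0 ≤ ⟪v, g v⟫) : g 0 = 0 := by
  set w := g 0
  -- along `v = -s • w` with `s → 0⁺` the hypothesis yields `‖w‖² ≤ 0`
  have hlim : Tendsto (fun s : ℝ => ⟪w, g (-s • w)⟫) (𝓝[>] 0) (𝓝 ⟪w, w⟫) := by
    have hline : Tendsto (fun s : ℝ => -s • w) (𝓝 0) (𝓝 0) := by
      simpa using (tendsto_id (x := 𝓝 (0 : ℝ))).neg.smul_const w
    exact (tendsto_const_nhds.inner (hg.tendsto.comp hline)).mono_left nhdsWithin_le_nhds
  have hnonpos : ∀ s > (0 : ℝ), ⟪w, g (-s • w)⟫ ≤ 0 := fun s hs => by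
    have := h (-s • w)
    rw [real_inner_smul_left] at this
    nlinarith
  have : ⟪w, w⟫ ≤ 0 := le_of_tendsto hlim (eventually_nhdsWithin_of_forall hnonpos)
  exact inner_self_eq_zero.1 (le_antisymm this real_inner_self_nonneg)

variable [CompleteSpace E] {f g : E → ℝ}

theorem ContDiff.continuous_gradient {n : WithTop ℕ∞} (hf : ContDiff ℝ n f) (hn : n ≠ 0) :
    Continuous (∇ f) :=
  (InnerProductSpace.toDual ℝ E).symm.continuous.comp (hf.continuous_fderiv hn)

theorem hasDerivAt_comp_lineMap (hf : Differentiable ℝ f) (x y : E) (t : ℝ) :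
    HasDerivAt (fun s : ℝ => f (lineMap x y s)) ⟪∇ f (lineMap x y t), y - x⟫ t := by
  have := (hf (lineMap x y t)).hasGradientAt.hasFDerivAt.comp_hasDerivAt t hasDerivAt_lineMap
  simpa only [Function.comp_def, InnerProductSpace.toDual_apply_apply] using this

theorem convexOn_univ_of_inner_gradient_sub_nonneg (hf : Differentiable ℝ f)
    (h : ∀ x y, 0 ≤ ⟪∇ f y - ∇ f x, y - x⟫) : ConvexOn ℝ univ f := by
  refine ⟨convex_univ, fun x _ y _ a b ha hb hab => ?_⟩
  have hderiv := hasDerivAt_comp_lineMap hf x y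
  have hmono : Monotone (deriv fun s : ℝ => f (lineMap x y s)) := by
    intro s t hst
    rw [(hderiv s).deriv, (hderiv t).deriv, ← sub_nonneg, ← inner_sub_left]
    rcases hst.eq_or_lt with rfl | hst
    · simp
    have key := h (lineMap x y s) (lineMap x y t)
    have hsub : lineMap x y t - lineMap x y s = (t - s) • (y - x) := by
      simp only [lineMap_apply_module']
      module
    rw [hsub, real_inner_smul_right] at key
    exact nonneg_of_mul_nonneg_right key (sub_pos.2 hst)
  have := (hmono.convexOn_univ_of_deriv fun t => (hderiv t).differentiableAt).2
    (mem_univ 0) (mem_univ 1) ha hb hab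
  obtain rfl := eq_sub_of_add_eq hab
  simpa [lineMap_apply_module] using this

theorem ConvexOn.inner_gradient_sub_nonneg (hc : ConvexOn ℝ univ f) (hf : Differentiable ℝ f)
    (x y : E) : 0 ≤ ⟪∇ f y - ∇ f x, y - x⟫ := by
  have hderiv := hasDerivAt_comp_lineMap hf x y
  have := (hc.comp_affineMap (lineMap x y)).monotoneOn_deriv
    (fun t _ => (hderiv t).differentiableAt) (mem_univ 0) (mem_univ 1) zero_le_one
  rw [Function.comp_def, (hderiv 0).deriv, (hderiv 1).deriv] at this
  simpa [inner_sub_left] using this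

theorem inner_add_gradient_eq_of_add_gradient_eq_zero {x y₀ : E} (hf : x + ∇ f y₀ = 0)
    (hg : y₀ + ∇ g x = 0) (y : E) :
    ⟪x + ∇ f y, y + ∇ g x⟫ = ⟪∇ f y - ∇ f y₀, y - y₀⟫ := by
  rw [eq_neg_of_add_eq_zero_right hf, eq_neg_of_add_eq_zero_right hg, sub_neg_eq_add,
    ← sub_eq_add_neg, add_comm]

theorem add_gradient_eq_zero_of_forall_inner_nonneg (hg : Continuous (∇ g))
    (h : ∀ x y, 0 ≤ ⟪x + ∇ f y, y + ∇ g x⟫) {x y : E} (hxy : x + ∇ f y = 0) :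
    y + ∇ g x = 0 := by
  have hcont : ContinuousAt (fun v => y + ∇ g (x + v)) 0 := by fun_prop
  simpa using eq_zero_of_forall_inner_self_apply_nonneg hcont fun v => by
    simpa [add_right_comm x v, hxy] using h (x + v) y

theorem forall_inner_add_gradient_nonneg_iff (hf : ContDiff ℝ 1 f) (hg : ContDiff ℝ 1 g) :
    (∀ x y : E, 0 ≤ ⟪x + ∇ f y, y + ∇ g x⟫) ↔
      (∀ x y : E, x + ∇ f y = 0 ↔ y + ∇ g x = 0) ∧ ConvexOn ℝ univ f ∧ ConvexOn ℝ univ g := by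
  have hfd := hf.differentiable one_ne_zero
  have hgd := hg.differentiable one_ne_zero
  constructor
  · intro h
    have h' : ∀ y x : E, 0 ≤ ⟪y + ∇ g x, x + ∇ f y⟫ := fun y x => by
      rw [real_inner_comm]
      exact h x y
    have hfg : ∀ {x y : E}, x + ∇ f y = 0 → y + ∇ g x = 0 :=
      add_gradient_eq_zero_of_forall_inner_nonneg (hg.continuous_gradient one_ne_zero) h
    have hgf : ∀ {x y : E}, y + ∇ g x = 0 → x + ∇ f y = 0 :=
      add_gradient_eq_zero_of_forall_inner_nonneg (hf.continuous_gradient one_ne_zero) h'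
    refine ⟨fun x y => ⟨hfg, hgf⟩, convexOn_univ_of_inner_gradient_sub_nonneg hfd fun x y => ?_,
      convexOn_univ_of_inner_gradient_sub_nonneg hgd fun x y => ?_⟩
    · rw [← inner_add_gradient_eq_of_add_gradient_eq_zero (neg_add_cancel _)
        (hfg (neg_add_cancel _))]
      exact h _ _
    · rw [← inner_add_gradient_eq_of_add_gradient_eq_zero (neg_add_cancel _)
        (hgf (neg_add_cancel _))]
      exact h' _ _
  · rintro ⟨hfg, hfc, -⟩ x y
    rw [inner_add_gradient_eq_of_add_gradient_eq_zero ((hfg _ _).2 (neg_add_cancel _))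
      (neg_add_cancel _)]
    exact hfc.inner_gradient_sub_nonneg hfd _ _

end

theorem statement_0_general (m : ℕ)
    (G Sg : EuclideanSpace ℝ (Fin m) → ℝ)
    (hG : ContDiff ℝ 2 G) (hSg : ContDiff ℝ 2 Sg) :
    (∀ Ξ τ : EuclideanSpace ℝ (Fin m), 0 ≤ ⟪Ξ + gradient G τ, τ + gradient Sg Ξ⟫) ↔
      ((∀ Ξ τ : EuclideanSpace ℝ (Fin m),
          Ξ + gradient G τ = 0 ↔ τ + gradient Sg Ξ = 0) ∧
        ConvexOn ℝ Set.univ G ∧ ConvexOn ℝ Set.univ Sg) :=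
  forall_inner_add_gradient_nonneg_iff (hG.of_le one_le_two) (hSg.of_le one_le_two)

/-- Lemma 3.1 of the paper: the dissipation inequality
`(Ξ + ∇G(τ)) · (τ + ∇Σ(Ξ)) ≥ 0` holds for all `Ξ, τ` iff the zero sets of
`Ξ + ∇G(τ)` and `τ + ∇Σ(Ξ)` coincide and both `G` and `Σ` are convex. -/
theorem statement_0 (m : ℕ) (hm : 1 ≤ m)
    (G Sg : EuclideanSpace ℝ (Fin m) → ℝ)
    (hG : ContDiff ℝ 2 G) (hSg : ContDiff ℝ 2 Sg) :
    (∀ Ξ τ : EuclideanSpace ℝ (Fin m), 0 ≤ ⟪Ξ + gradient G τ, τ + gradient Sg Ξ⟫) ↔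
      ((∀ Ξ τ : EuclideanSpace ℝ (Fin m),
          Ξ + gradient G τ = 0 ↔ τ + gradient Sg Ξ = 0) ∧
        ConvexOn ℝ Set.univ G ∧ ConvexOn ℝ Set.univ Sg) :=
  statement_0_general m G Sg hG hSg
end

section
/- Let D ≥ 1, γ_v > 0, let Σ : ℝ^D → ℝ be C² with 0 < ∇²Σ(Ξ) ≤ γ_v·Id for all Ξ and with ∇Σ : ℝ^D → ℝ^D a bijection, and let G : ℝ^D → ℝ be C² with ∇G(τ) = −(∇Σ)⁻¹(−τ) for all τ. Then for all Ξ, τ ∈ ℝ^D the dissipation satisfies (Ξ + ∇G(τ)) · (τ + ∇Σ(Ξ)) ≥ (1/γ_v) |τ + ∇Σ(Ξ)|². -/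
/-!
Since `∇Σ(-∇G σ) = -σ`, the chain rule makes `∇²G(τ)` a right inverse of `∇²Σ(-∇G τ)`.
A symmetric operator with `0 ≤ A ≤ γ` satisfies `γ⁻¹ ‖A y‖² ≤ ⟪A y, y⟫`; taking `y = ∇²G(τ) v`
gives `∇²G ≥ γ⁻¹`, so `∇G` is `γ⁻¹`-strongly monotone by the mean value theorem. Evaluating this
at `τ` and `-∇Σ(Ξ)`, where `∇G(-∇Σ Ξ) = -Ξ`, gives the inequality.
-/

open scoped RealInnerProductSpace

theorem HasFDerivAt.comp_eq_id_of_leftInverse {𝕜 E F : Type*} [NontriviallyNormedField 𝕜]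
    [NormedAddCommGroup E] [NormedSpace 𝕜 E] [NormedAddCommGroup F] [NormedSpace 𝕜 F]
    {f : F → E} {g : E → F} {f' : F →L[𝕜] E} {g' : E →L[𝕜] F} {x : E}
    (hf : HasFDerivAt f f' (g x)) (hg : HasFDerivAt g g' x) (hfg : Function.LeftInverse f g) :
    f'.comp g' = ContinuousLinearMap.id 𝕜 E := by
  have hcomp := hf.comp x hg
  rw [hfg.comp_eq_id] at hcomp
  exact hcomp.unique (hasFDerivAt_id x)

section InnerProductSpace

variable {E : Type*} [NormedAddCommGroup E] [InnerProductSpace ℝ E]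

theorem LinearMap.IsSymmetric.inv_mul_norm_sq_apply_le_inner {A : E →ₗ[ℝ] E}
    (hA : A.IsSymmetric) {γ : ℝ} (hγ : 0 < γ) (hnonneg : ∀ x, 0 ≤ ⟪A x, x⟫)
    (hle : ∀ x, ⟪A x, x⟫ ≤ γ * ‖x‖ ^ 2) (x : E) :
    γ⁻¹ * ‖A x‖ ^ 2 ≤ ⟪A x, x⟫ := by
  -- expand `0 ≤ ⟪A y, y⟫` at `y = x - γ⁻¹ • A x`
  have key := hnonneg (x - γ⁻¹ • A x)
  have hAAx : ⟪A (A x), x⟫ = ‖A x‖ ^ 2 := by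
    rw [hA, real_inner_self_eq_norm_sq]
  simp only [map_sub, map_smul, inner_sub_left, inner_sub_right, real_inner_smul_left,
    real_inner_smul_right, hAAx, real_inner_self_eq_norm_sq] at key
  have hquad : γ⁻¹ * (γ⁻¹ * ⟪A (A x), A x⟫) ≤ γ⁻¹ * ‖A x‖ ^ 2 :=
    calc γ⁻¹ * (γ⁻¹ * ⟪A (A x), A x⟫) ≤ γ⁻¹ * (γ⁻¹ * (γ * ‖A x‖ ^ 2)) := by gcongr; exact hle _
      _ = γ⁻¹ * ‖A x‖ ^ 2 := by field_simp
  linarith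

theorem inner_sub_sub_ge_of_inner_fderiv_ge {F : E → E} (hF : Differentiable ℝ F) {m : ℝ}
    (hm : ∀ x v, m * ‖v‖ ^ 2 ≤ ⟪fderiv ℝ F x v, v⟫) (u v : E) :
    m * ‖u - v‖ ^ 2 ≤ ⟪F u - F v, u - v⟫ := by
  set w := u - v
  have hderiv : ∀ t : ℝ, HasDerivAt (fun t : ℝ => ⟪F (v + t • w), w⟫)
      ⟪fderiv ℝ F (v + t • w) w, w⟫ t := by
    intro t
    have hline : HasDerivAt (fun t : ℝ => v + t • w) w t := by
      simpa using ((hasDerivAt_id t).smul_const w).const_add v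
    simpa using ((hF _).hasFDerivAt.comp_hasDerivAt t hline).inner ℝ (hasDerivAt_const t w)
  obtain ⟨c, -, hc⟩ := exists_hasDerivAt_eq_slope _ _ zero_lt_one
    (continuous_iff_continuousAt.2 fun t => (hderiv t).continuousAt).continuousOn
    fun t _ => hderiv t
  have hvw : v + w = u := add_sub_cancel v u
  simp only [one_smul, zero_smul, add_zero, sub_zero, div_one, hvw, ← inner_sub_left] at hc
  exact hc ▸ hm _ w

variable [CompleteSpace E]

theorem gradient_eq_toDual_symm_comp_fderiv (f : E → ℝ) :
    gradient f = (InnerProductSpace.toDual ℝ E).symm.toContinuousLinearEquiv ∘ fderiv ℝ f :=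
  rfl

theorem contDiff_gradient {f : E → ℝ} {n : WithTop ℕ∞} (hf : ContDiff ℝ (n + 1) f) :
    ContDiff ℝ n (gradient f) := by
  rw [gradient_eq_toDual_symm_comp_fderiv]
  exact (InnerProductSpace.toDual ℝ E).symm.toContinuousLinearEquiv.contDiff.comp
    (hf.fderiv_right le_rfl)

theorem inner_fderiv_gradient_apply (f : E → ℝ) (x u v : E) :
    ⟪fderiv ℝ (gradient f) x u, v⟫ = fderiv ℝ (fderiv ℝ f) x u v := by
  rw [gradient_eq_toDual_symm_comp_fderiv,
    (InnerProductSpace.toDual ℝ E).symm.toContinuousLinearEquiv.comp_fderiv]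
  simp [InnerProductSpace.toDual_symm_apply]

theorem ContDiff.isSymmetric_fderiv_gradient {f : E → ℝ} (hf : ContDiff ℝ 2 f) (x : E) :
    (fderiv ℝ (gradient f) x : E →ₗ[ℝ] E).IsSymmetric := fun u v => by
  rw [ContinuousLinearMap.coe_coe, real_inner_comm _ u, inner_fderiv_gradient_apply,
    inner_fderiv_gradient_apply]
  exact hf.contDiffAt.isSymmSndFDerivAt (by simp [minSmoothness_of_isRCLikeNormedField]) u v

theorem inv_mul_norm_sq_le_inner_fderiv_gradient_of_gradient_inverse {Sg G : E → ℝ} {γ : ℝ}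
    (hγ : 0 < γ) (hSg : ContDiff ℝ 2 Sg) (hG : Differentiable ℝ (gradient G))
    (hnonneg : ∀ x v, 0 ≤ ⟪fderiv ℝ (gradient Sg) x v, v⟫)
    (hle : ∀ x v, ⟪fderiv ℝ (gradient Sg) x v, v⟫ ≤ γ * ‖v‖ ^ 2)
    (hinv : ∀ σ, gradient Sg (-gradient G σ) = -σ) (τ v : E) :
    γ⁻¹ * ‖v‖ ^ 2 ≤ ⟪fderiv ℝ (gradient G) τ v, v⟫ := by
  set A := fderiv ℝ (gradient Sg) (-gradient G τ)
  set B := fderiv ℝ (gradient G) τ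
  have hAB : A (B v) = v := by
    have hSgd : Differentiable ℝ (gradient Sg) :=
      (contDiff_gradient (n := 1) hSg).differentiable one_ne_zero
    have hid := ((hSgd _).hasFDerivAt.neg).comp_eq_id_of_leftInverse (hG τ).hasFDerivAt.neg
      (f := fun y => -gradient Sg y) (g := fun σ => -gradient G σ) fun σ => by simp [hinv]
    simpa using congrArg (· v) hid
  have hcoco := (hSg.isSymmetric_fderiv_gradient (-gradient G τ)).inv_mul_norm_sq_apply_le_inner
    hγ (hnonneg _) (hle _) (B v)
  rwa [ContinuousLinearMap.coe_coe, hAB, real_inner_comm] at hcoco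

end InnerProductSpace

theorem statement_3_general (D : ℕ) (γv : ℝ) (hγv : 0 < γv)
    (Sg G : EuclideanSpace ℝ (Fin D) → ℝ)
    (hSg : ContDiff ℝ 2 Sg) (hG : ContDiff ℝ 2 G)
    (hpd : ∀ Ξ X : EuclideanSpace ℝ (Fin D), X ≠ 0 →
      0 < ⟪fderiv ℝ (gradient Sg) Ξ X, X⟫)
    (hub : ∀ Ξ X : EuclideanSpace ℝ (Fin D),
      ⟪fderiv ℝ (gradient Sg) Ξ X, X⟫ ≤ γv * ‖X‖ ^ 2)
    (hbij : Function.Bijective (gradient Sg))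
    (hGrad : ∀ τ, gradient G τ = -(Function.invFun (gradient Sg) (-τ))) :
    ∀ Ξ τ : EuclideanSpace ℝ (Fin D),
      (1 / γv) * ‖τ + gradient Sg Ξ‖ ^ 2 ≤ ⟪Ξ + gradient G τ, τ + gradient Sg Ξ⟫ := by
  intro Ξ τ
  have hnonneg : ∀ x v, 0 ≤ ⟪fderiv ℝ (gradient Sg) x v, v⟫ := fun x v => by
    rcases eq_or_ne v 0 with rfl | hv
    · simp
    · exact (hpd x v hv).le
  have hGd : Differentiable ℝ (gradient G) :=
    (contDiff_gradient (n := 1) hG).differentiable one_ne_zero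
  have hSg_G : ∀ σ, gradient Sg (-gradient G σ) = -σ := fun σ => by
    rw [hGrad, neg_neg, Function.rightInverse_invFun hbij.2]
  have hG_Sg : gradient G (-gradient Sg Ξ) = -Ξ := by
    rw [hGrad, neg_neg, Function.leftInverse_invFun hbij.1]
  have hmono := inner_sub_sub_ge_of_inner_fderiv_ge hGd
    (inv_mul_norm_sq_le_inner_fderiv_gradient_of_gradient_inverse hγv hSg hGd hnonneg hub hSg_G)
    τ (-gradient Sg Ξ)
  rwa [hG_Sg, sub_neg_eq_add, sub_neg_eq_add, add_comm (gradient G τ), ← one_div] at hmono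

/-- Lower bound (pr1) on the relaxation dissipation: if `0 < ∇²Σ ≤ γ_v·Id`,
`∇Σ` is a bijection and `∇G(τ) = −(∇Σ)⁻¹(−τ)`, then
`(Ξ + ∇G(τ)) · (τ + ∇Σ(Ξ)) ≥ (1/γ_v)|τ + ∇Σ(Ξ)|²`. -/
theorem statement_3 (D : ℕ) (hD : 1 ≤ D) (γv : ℝ) (hγv : 0 < γv)
    (Sg G : EuclideanSpace ℝ (Fin D) → ℝ)
    (hSg : ContDiff ℝ 2 Sg) (hG : ContDiff ℝ 2 G)
    (hpd : ∀ Ξ X : EuclideanSpace ℝ (Fin D), X ≠ 0 →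
      0 < ⟪fderiv ℝ (gradient Sg) Ξ X, X⟫)
    (hub : ∀ Ξ X : EuclideanSpace ℝ (Fin D),
      ⟪fderiv ℝ (gradient Sg) Ξ X, X⟫ ≤ γv * ‖X‖ ^ 2)
    (hbij : Function.Bijective (gradient Sg))
    (hGrad : ∀ τ, gradient G τ = -(Function.invFun (gradient Sg) (-τ))) :
    ∀ Ξ τ : EuclideanSpace ℝ (Fin D),
      (1 / γv) * ‖τ + gradient Sg Ξ‖ ^ 2 ≤ ⟪Ξ + gradient G τ, τ + gradient Sg Ξ⟫ :=
  statement_3_general D γv hγv Sg G hSg hG hpd hub hbij hGrad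
end

section
/- Let y : ℝ³ × ℝ → ℝ³ be a C² map, write v_i = ∂y_i/∂t and F_{iα}(x,t) = ∂y_i/∂x_α. Then for all (x,t): ∂/∂t [ det F(x,t) ] = Σ_{i,α} ∂/∂x_α [ v_i(x,t) (cof F(x,t))_{iα} ]. -/
/-!
Jacobi's formula gives `∂ₜ det F = Σ (cof F)_{iα} ∂ₜ F_{iα}`, and `∂ₜ F_{iα} = ∂_α vᵢ` because
mixed partial derivatives of `y` commute. On the other side, the product rule gives
`Σ ∂_α (vᵢ (cof F)_{iα}) = Σ (cof F)_{iα} ∂_α vᵢ + Σ vᵢ ∂_α (cof F)_{iα}`, and the last sum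
vanishes by the Piola identity `Σ_α ∂_α (cof ∇y)_{iα} = 0`: differentiating the quadratic
expression for `cof` produces the second derivatives `∂_α ∂_β y_j`, symmetric in `α, β`,
contracted against `ε_{αβγ}`, which is antisymmetric in `α, β`.
-/

noncomputable section

/-- Matrices as `Fin 3 → Fin 3 → ℝ`. -/
abbrev Mat3 : Type := Fin 3 → Fin 3 → ℝ

/-- The Levi-Civita symbol on `Fin 3`. -/
def lev (i j k : Fin 3) : ℝ :=
  (((j : ℕ) : ℝ) - ((i : ℕ) : ℝ)) * (((k : ℕ) : ℝ) - ((i : ℕ) : ℝ)) *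
    (((k : ℕ) : ℝ) - ((j : ℕ) : ℝ)) / 2

/-- The cofactor matrix `(cof M)_{iα} = ½ ε_{ijk} ε_{αβγ} M_{jβ} M_{kγ}`. -/
def cof3 (M : Mat3) : Mat3 := fun i α =>
  (1 / 2) * ∑ j, ∑ k, ∑ β, ∑ γ, lev i j k * lev α β γ * M j β * M k γ

/-- The determinant of a `3×3` matrix. -/
def det3 (M : Mat3) : ℝ := Matrix.det (Matrix.of M)

section SecondDerivatives

variable {E F G : Type*} [NormedAddCommGroup E] [NormedSpace ℝ E] [NormedAddCommGroup F]
  [NormedSpace ℝ F] [NormedAddCommGroup G] [NormedSpace ℝ G]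

theorem HasFDerivAt.comp_prodMk_left {f : E × F → G} {f' : E × F →L[ℝ] G} {x : E} {s : F}
    (hf : HasFDerivAt f f' (x, s)) :
    HasFDerivAt (fun z => f (z, s)) (f'.comp (.inl ℝ E F)) x :=
  hf.comp x (hasFDerivAt_prodMk_left x s)

theorem HasFDerivAt.hasDerivAt_comp_prodMk_right {f : E × ℝ → G} {f' : E × ℝ →L[ℝ] G}
    {x : E} {t : ℝ} (hf : HasFDerivAt f f' (x, t)) :
    HasDerivAt (fun s => f (x, s)) (f' (0, 1)) t := by
  simpa [Function.comp_def] using (hf.comp t (hasFDerivAt_prodMk_right x t)).hasDerivAt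

theorem fderiv_comp_prodMk_left_apply {f : E × F → G} {x : E} {s : F}
    (hf : DifferentiableAt ℝ f (x, s)) (w : E) :
    fderiv ℝ (fun z => f (z, s)) x w = fderiv ℝ f (x, s) (w, 0) := by
  simp [hf.hasFDerivAt.comp_prodMk_left.fderiv]

theorem deriv_comp_prodMk_right {f : E × ℝ → G} {x : E} {t : ℝ}
    (hf : DifferentiableAt ℝ f (x, t)) :
    deriv (fun s => f (x, s)) t = fderiv ℝ f (x, t) (0, 1) :=
  hf.hasFDerivAt.hasDerivAt_comp_prodMk_right.deriv

theorem hasFDerivAt_fderiv_apply {f : E → G} {x : E} (hf : DifferentiableAt ℝ (fderiv ℝ f) x)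
    (u : E) : HasFDerivAt (fun z => fderiv ℝ f z u) ((fderiv ℝ (fderiv ℝ f) x).flip u) x := by
  simpa using hf.hasFDerivAt.clm_apply (hasFDerivAt_const u x)

theorem ContDiff.differentiable_fderiv {f : E → G} (hf : ContDiff ℝ 2 f) :
    Differentiable ℝ (fderiv ℝ f) :=
  (hf.fderiv_right (m := 1) (by norm_num)).differentiable (by norm_num)

theorem ContDiff.differentiableAt_fderiv_apply {f : E → G} (hf : ContDiff ℝ 2 f) (x u : E) :
    DifferentiableAt ℝ (fun z => fderiv ℝ f z u) x :=
  (hasFDerivAt_fderiv_apply (hf.differentiable_fderiv x) u).differentiableAt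

theorem ContDiff.fderiv_fderiv_apply_comm {f : E → G} (hf : ContDiff ℝ 2 f) (x u w : E) :
    fderiv ℝ (fun z => fderiv ℝ f z u) x w = fderiv ℝ (fun z => fderiv ℝ f z w) x u := by
  simp only [(hasFDerivAt_fderiv_apply (hf.differentiable_fderiv x) _).fderiv,
    ContinuousLinearMap.flip_apply]
  exact (hf.contDiffAt.isSymmSndFDerivAt (by simp [minSmoothness_of_isRCLikeNormedField])) w u

theorem ContDiff.differentiableAt_deriv_comp_prodMk {g : E × ℝ → G} (hg : ContDiff ℝ 2 g)
    (x : E) (t : ℝ) : DifferentiableAt ℝ (fun z => deriv (fun s => g (z, s)) t) x := by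
  simp only [deriv_comp_prodMk_right ((hg.differentiable (by norm_num)) _)]
  exact (hasFDerivAt_fderiv_apply (hg.differentiable_fderiv _) _).comp_prodMk_left.differentiableAt

theorem ContDiff.hasDerivAt_fderiv_comp_prodMk {g : E × ℝ → G} (hg : ContDiff ℝ 2 g)
    (x w : E) (t : ℝ) :
    HasDerivAt (fun s => fderiv ℝ (fun z => g (z, s)) x w)
      (fderiv ℝ (fun z => deriv (fun s => g (z, s)) t) x w) t := by
  have hg1 : Differentiable ℝ g := hg.differentiable (by norm_num)
  simp only [fderiv_comp_prodMk_left_apply (hg1 _), deriv_comp_prodMk_right (hg1 _)]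
  rw [(hasFDerivAt_fderiv_apply (hg.differentiable_fderiv _) _).comp_prodMk_left.fderiv]
  convert (hasFDerivAt_fderiv_apply (hg.differentiable_fderiv (x, t))
    (w, 0)).hasDerivAt_comp_prodMk_right using 1
  simpa using (hg.contDiffAt.isSymmSndFDerivAt (by simp [minSmoothness_of_isRCLikeNormedField])) _ _

end SecondDerivatives

theorem lev_swap₁₂ (i j k : Fin 3) : lev j i k = -lev i j k := by
  simp only [lev]; ring

theorem sum_lev_mul_eq_zero_of_symm {H : Fin 3 → Fin 3 → ℝ} (hH : ∀ a b, H a b = H b a)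
    (γ : Fin 3) : ∑ α, ∑ β, lev α β γ * H α β = 0 := by
  have h : ∑ α, ∑ β, lev α β γ * H α β = ∑ α, ∑ β, -(lev α β γ * H α β) := by
    rw [Finset.sum_comm]
    refine Finset.sum_congr rfl fun a _ => Finset.sum_congr rfl fun b _ => ?_
    rw [lev_swap₁₂, hH]; ring
  simp only [Finset.sum_neg_distrib] at h
  linarith

theorem HasFDerivAt.cof3 {E : Type*} [NormedAddCommGroup E] [NormedSpace ℝ E] {M : E → Mat3}
    {M' : Fin 3 → Fin 3 → E →L[ℝ] ℝ} {x : E}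
    (hM : ∀ j β, HasFDerivAt (fun z => M z j β) (M' j β) x) (i α : Fin 3) :
    HasFDerivAt (fun z => cof3 (M z) i α) ((1 / 2 : ℝ) • ∑ j, ∑ k, ∑ β, ∑ γ,
      (lev i j k * lev α β γ) • (M x k γ • M' j β + M x j β • M' k γ)) x := by
  refine ((HasFDerivAt.fun_sum fun j _ => HasFDerivAt.fun_sum fun k _ =>
    HasFDerivAt.fun_sum fun β _ => HasFDerivAt.fun_sum fun γ _ =>
      ((hM j β).const_mul (lev i j k * lev α β γ)).mul (hM k γ)).const_mul
        (1 / 2 : ℝ)).congr_fderiv ?_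
  simp only [smul_add, smul_smul]
  congr! 5
  rw [add_comm, mul_comm (M x _ _)]

theorem sum_fderiv_cof3_eq_zero {M : (Fin 3 → ℝ) → Mat3} {x : Fin 3 → ℝ}
    (hM : ∀ j β, DifferentiableAt ℝ (fun z => M z j β) x)
    (hsymm : ∀ j α β, fderiv ℝ (fun z => M z j β) x (Pi.single α 1) =
      fderiv ℝ (fun z => M z j α) x (Pi.single β 1)) (i : Fin 3) :
    ∑ α, fderiv ℝ (fun z => cof3 (M z) i α) x (Pi.single α 1) = 0 := by
  set G : Fin 3 → Fin 3 → Fin 3 → ℝ := fun j α β => fderiv ℝ (fun z => M z j β) x (Pi.single α 1)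
  have hG : ∀ j γ, ∑ α, ∑ β, lev α β γ * G j α β = 0 := fun j =>
    sum_lev_mul_eq_zero_of_symm (hsymm j)
  simp only [(HasFDerivAt.cof3 (fun j β => (hM j β).hasFDerivAt) i _).fderiv,
    smul_apply, sum_apply, add_apply, smul_eq_mul]
  calc _ = (1 / 2) * ∑ j, ∑ k, lev i j k * (∑ γ, M x k γ * ∑ α, ∑ β, lev α β γ * G j α β -
        ∑ β, M x j β * ∑ α, ∑ γ, lev α γ β * G k α γ) := by
        simp only [G, Fin.sum_univ_three, lev]
        norm_num
        ring
    _ = 0 := by simp [hG]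

theorem HasDerivAt.det3 {M : ℝ → Mat3} {M' : Mat3} {t : ℝ}
    (hM : ∀ i α, HasDerivAt (fun s => M s i α) (M' i α) t) :
    HasDerivAt (fun s => det3 (M s)) (∑ i, ∑ α, cof3 (M t) i α * M' i α) t := by
  simp only [_root_.det3, Matrix.det_fin_three, Matrix.of_apply]
  refine ((((((hM 0 0).fun_mul (hM 1 1)).fun_mul (hM 2 2)).fun_sub
    (((hM 0 0).fun_mul (hM 1 2)).fun_mul (hM 2 1))).fun_sub
    (((hM 0 1).fun_mul (hM 1 0)).fun_mul (hM 2 2))).fun_add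
    (((hM 0 1).fun_mul (hM 1 2)).fun_mul (hM 2 0))).fun_add
    (((hM 0 2).fun_mul (hM 1 0)).fun_mul (hM 2 1)) |>.fun_sub
    (((hM 0 2).fun_mul (hM 1 1)).fun_mul (hM 2 0)) |>.congr_deriv ?_
  simp only [_root_.cof3, Fin.sum_univ_three, lev]
  norm_num
  ring

theorem deriv_det3_eq_sum_fderiv_mul_cof3 {F : (Fin 3 → ℝ) → ℝ → Mat3}
    {v : (Fin 3 → ℝ) → ℝ → Fin 3 → ℝ} {x : Fin 3 → ℝ} {t : ℝ}
    (hFt : ∀ i α, HasDerivAt (fun s => F x s i α)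
      (fderiv ℝ (fun z => v z t i) x (Pi.single α 1)) t)
    (hFx : ∀ j β, DifferentiableAt ℝ (fun z => F z t j β) x)
    (hvx : ∀ i, DifferentiableAt ℝ (fun z => v z t i) x)
    (hsymm : ∀ j α β, fderiv ℝ (fun z => F z t j β) x (Pi.single α 1) =
      fderiv ℝ (fun z => F z t j α) x (Pi.single β 1)) :
    deriv (fun s => det3 (F x s)) t =
      ∑ i, ∑ α, fderiv ℝ (fun z => v z t i * cof3 (F z t) i α) x (Pi.single α 1) := by
  have hcof := HasFDerivAt.cof3 fun j β => (hFx j β).hasFDerivAt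
  rw [(HasDerivAt.det3 hFt).deriv]
  simp only [fderiv_fun_mul (hvx _) (hcof _ _).differentiableAt, add_apply, smul_apply,
    smul_eq_mul, Finset.sum_add_distrib, ← Finset.mul_sum, sum_fderiv_cof3_eq_zero hFx hsymm,
    mul_zero, zero_add]

/-- Kinematic transport identity for the determinant (kinnl): for a `C²`
motion `y(x,t)` with velocity `v = ∂_t y` and deformation gradient `F = ∇_x y`,
`∂_t det F = Σ_{i,α} ∂_α ( v_i (cof F)_{iα} )`. -/
theorem statement_6 (y : (Fin 3 → ℝ) → ℝ → (Fin 3 → ℝ))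
    (hy : ContDiff ℝ 2 (fun q : (Fin 3 → ℝ) × ℝ => y q.1 q.2))
    (v : (Fin 3 → ℝ) → ℝ → (Fin 3 → ℝ))
    (hv : ∀ x t i, v x t i = deriv (fun s => y x s i) t)
    (F : (Fin 3 → ℝ) → ℝ → Mat3)
    (hF : ∀ x t i α, F x t i α = fderiv ℝ (fun z => y z t i) x (Pi.single α 1)) :
    ∀ (x : Fin 3 → ℝ) (t : ℝ),
      deriv (fun s => det3 (F x s)) t =
        ∑ i, ∑ α, fderiv ℝ (fun z => v z t i * cof3 (F z t) i α) x (Pi.single α 1) := by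
  intro x t
  have hyi : ∀ i, ContDiff ℝ 2 (fun q : (Fin 3 → ℝ) × ℝ => y q.1 q.2 i) := fun i =>
    (contDiff_apply ℝ ℝ i).comp hy
  have hyt : ∀ i, ContDiff ℝ 2 (fun z => y z t i) := fun i =>
    (hyi i).comp (contDiff_id.prodMk contDiff_const)
  have hFeq : ∀ j β,
      (fun z => F z t j β) = fun z => fderiv ℝ (fun z' => y z' t j) z (Pi.single β 1) :=
    fun j β => funext fun z => hF z t j β
  have hveq : ∀ i, (fun z => v z t i) = fun z => deriv (fun s => y z s i) t :=
    fun i => funext fun z => hv z t i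
  refine deriv_det3_eq_sum_fderiv_mul_cof3 (fun i α => ?_) (fun j β => ?_) (fun i => ?_)
    (fun j α β => ?_)
  · simp only [hF, hveq]
    exact (hyi i).hasDerivAt_fderiv_comp_prodMk x _ t
  · rw [hFeq]
    exact (hyt j).differentiableAt_fderiv_apply x _
  · rw [hveq]
    exact (hyi i).differentiableAt_deriv_comp_prodMk x t
  · simp only [hFeq]
    exact (hyt j).fderiv_fderiv_apply_comm x _ _
end
end
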